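/- arXiv:2101.04531 — 8 statements merged into one kernel-verified Lean document; each statement's English description precedes it below -/
import Mathlib

section
/- Let D : J ⥤ C be a small diagram, let im D be its image presheaf, and let ∫ im D denote the category of elements of im D with projection π : ∫ im D ⥤ C. Then the canonical functor F̃ : J ⥤ ∫ im D sending J to (D J, [J, id_{D J}]) is a final (confinal) functor, and π ∘ F̃ = D. -/
open CategoryTheory CategoryTheory.Limits

universe v u

/-- The canonical functor from `J` to (the opposite of) the category of elements of the image
presheaf `im D = colimit (D ⋙ yoneda)`, sending `j` to `(D j, [j, 𝟙 (D j)])`, is a final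
functor, and its composite with the projection to `C` equals `D`. -/
theorem stmt4 {J : Type v} [SmallCategory J] {C : Type u} [Category.{v} C] (D : J ⥤ C) :
    ∃ G : J ⥤ (colimit (D ⋙ yoneda)).Elementsᵒᵖ,
      G.Final ∧
      G ⋙ (CategoryOfElements.π (colimit (D ⋙ yoneda))).leftOp = D ∧
      ∀ j : J, (G.obj j).unop =
        ⟨Opposite.op (D.obj j),
          ((colimit.ι (D ⋙ yoneda) j).app (Opposite.op (D.obj j))) (𝟙 (D.obj j))⟩ := by
  refine ⟨((colimit.cocone (D ⋙ yoneda)).toCostructuredArrow ⋙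
      CostructuredArrow.pre D yoneda _) ⋙
      (CategoryOfElements.costructuredArrowYonedaEquivalence _).inverse, ?_, ?_, ?_⟩
  · have h1 := Presheaf.final_toCostructuredArrow_comp_pre D (colimit.isColimit (D ⋙ yoneda))
    exact Functor.final_comp _ _
  · rfl
  · intro j
    rfl
end

section
/- Let C be a category with small colimits and D : J ⥤ C a small diagram with image presheaf im D. Then the colimit of the projection functor π : ∫ im D ⥤ C from the category of elements of im D exists and is isomorphic to the colimit of D. -/
/-!
A colimit cocone `c` on `F ⋙ yoneda` turns every `i` into the element of `c.pt` given by the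
leg `yoneda (F i) ⟶ c.pt`. The resulting functor `I ⥤ (∫ c.pt)ᵒᵖ` lifts `F` through the
projection and is final (Kashiwara–Schapira, Prop. 2.6.3(ii), phrased for costructured arrows
over `yoneda`), so the projection has the same colimit as `F`.
-/

open CategoryTheory CategoryTheory.Limits

universe v u

namespace CategoryTheory.Presheaf

variable {I : Type v} [SmallCategory I] {C : Type u} [Category.{v} C] {F : I ⥤ C}
  {c : Cocone (F ⋙ yoneda)}

noncomputable def toElementsOp (c : Cocone (F ⋙ yoneda)) : I ⥤ c.pt.Elementsᵒᵖ :=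
  (c.toCostructuredArrow ⋙ CostructuredArrow.pre F yoneda c.pt) ⋙
    (CategoryOfElements.costructuredArrowYonedaEquivalence c.pt).inverse

noncomputable def toElementsOpCompπ (c : Cocone (F ⋙ yoneda)) :
    toElementsOp c ⋙ (CategoryOfElements.π c.pt).leftOp ≅ F :=
  Iso.refl _

theorem final_toElementsOp (hc : IsColimit c) : (toElementsOp c).Final :=
  have := final_toCostructuredArrow_comp_pre F hc
  Functor.final_comp_equivalence _ _

theorem hasColimit_π_leftOp [HasColimit F] (hc : IsColimit c) :
    HasColimit (CategoryOfElements.π c.pt).leftOp :=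
  have := final_toElementsOp hc
  have := hasColimit_of_iso (toElementsOpCompπ c)
  Functor.Final.hasColimit_of_comp (toElementsOp c)

noncomputable def colimitπLeftOpIso [HasColimit F] [HasColimit (CategoryOfElements.π c.pt).leftOp]
    (hc : IsColimit c) : colimit (CategoryOfElements.π c.pt).leftOp ≅ colimit F :=
  have := final_toElementsOp hc
  (Functor.Final.colimitIso (toElementsOp c) _).symm ≪≫
    HasColimit.isoOfNatIso (toElementsOpCompπ c)

end CategoryTheory.Presheaf

/-- If `C` has small colimits, then the colimit of the projection from the category of elements
of the image presheaf of a small diagram `D : J ⥤ C` exists and is isomorphic to the colimit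
of `D`. -/
theorem stmt5 {J : Type v} [SmallCategory J] {C : Type u} [Category.{v} C] [HasColimits C]
    (D : J ⥤ C) :
    ∃ _ : HasColimit (CategoryOfElements.π (colimit (D ⋙ yoneda))).leftOp,
      Nonempty (colimit (CategoryOfElements.π (colimit (D ⋙ yoneda))).leftOp ≅ colimit D) :=
  have := Presheaf.hasColimit_π_leftOp (colimit.isColimit (D ⋙ yoneda))
  ⟨this, ⟨Presheaf.colimitπLeftOpIso (colimit.isColimit (D ⋙ yoneda))⟩⟩
end

section
/- Let D : J ⥤ C and E : K ⥤ C be small diagrams with naturally isomorphic image presheaves. Then for every category D' and functor F : C ⥤ D', the diagram F ∘ D admits a colimit if and only if F ∘ E does, and in that case the two colimits are isomorphic. -/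
/-!
A cocone on `G ⋙ F` with apex `X` is, by Yoneda, a cocone on `G ⋙ yoneda` whose apex is the
presheaf `c ↦ (F c ⟶ X)` (with values lifted to a common universe), i.e. a map out of the image presheaf of `G`. Hence the functor of
cocones on `G ⋙ F` only depends on the image presheaf of `G`, and a colimit of `G ⋙ F` is
precisely a corepresenting object of this functor.
-/

open CategoryTheory CategoryTheory.Limits

universe v u v2 u2

namespace CategoryTheory.Limits

open Presheaf

universe w v₁ v₂ v₃ u₁ u₂ u₃

section

variable {J : Type u₃} [Category.{v₃} J] {C : Type u₁} [Category.{v₁} C]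
  {ℰ : Type u₂} [Category.{v₂} ℰ]

def coconesObjCompEquiv (G : J ⥤ C) (A : C ⥤ ℰ) (X : ℰ) :
    ((G ⋙ A) ⟶ (Functor.const J).obj X) ≃ (G ⋙ uliftYoneda.{max w v₂} ⟶
      (Functor.const J).obj ((restrictedULiftYoneda.{max w v₁} A).obj X)) where
  toFun τ :=
    { app j := uliftYonedaEquiv.symm (ULift.up (τ.app j))
      naturality j j' f := by
        ext Y ⟨g⟩
        change ULift.up (A.map (g ≫ G.map f) ≫ τ.app j') = ULift.up (A.map g ≫ τ.app j)
        simpa using A.map g ≫= τ.naturality f }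
  invFun σ :=
    { app j := (uliftYonedaEquiv (σ.app j)).down
      naturality j j' f := by
        dsimp
        rw [Category.comp_id, map_comp_uliftYonedaEquiv_down, ← Functor.comp_map, σ.naturality]
        rfl }
  left_inv τ := by
    ext j
    dsimp
    erw [Equiv.apply_symm_apply]
  right_inv σ := by
    ext1
    ext1 j
    exact Equiv.symm_apply_apply _ _

lemma coconesObjCompEquiv_comp (G : J ⥤ C) (A : C ⥤ ℰ) {X Y : ℰ}
    (τ : (G ⋙ A) ⟶ (Functor.const J).obj X) (g : X ⟶ Y) :
    coconesObjCompEquiv.{w} G A Y (τ ≫ (Functor.const J).map g) =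
      coconesObjCompEquiv G A X τ ≫ (Functor.const J).map ((restrictedULiftYoneda A).map g) := by
  ext j Y ⟨f⟩
  change ULift.up (A.map f ≫ τ.app j ≫ g) = ULift.up ((A.map f ≫ τ.app j) ≫ g)
  rw [Category.assoc]

def coconesCompULiftIso (G : J ⥤ C) (A : C ⥤ ℰ) :
    (G ⋙ A).cocones ⋙ uliftFunctor.{max u₁ v₁ w} ≅
      restrictedULiftYoneda.{max w v₁} A ⋙ (G ⋙ uliftYoneda.{max w v₂}).cocones :=
  NatIso.ofComponents (fun X => (Equiv.ulift.trans (coconesObjCompEquiv G A X)).toIso)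
    (fun g => by
      ext ⟨τ⟩
      exact coconesObjCompEquiv_comp G A τ g)

end

section

variable {J₁ J₂ : Type u₃} [Category.{v₃} J₁] [Category.{v₃} J₂] {C : Type u₁} [Category.{v₁} C]
  {F₁ : J₁ ⥤ C} {F₂ : J₂ ⥤ C}

def coconesIsoOfIsColimit {s : Cocone F₁} {t : Cocone F₂} (hs : IsColimit s) (ht : IsColimit t)
    (e : s.pt ≅ t.pt) : F₁.cocones ≅ F₂.cocones :=
  hs.natIso.symm ≪≫ Functor.isoWhiskerRight (coyoneda.mapIso e.op.symm) _ ≪≫ ht.natIso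

noncomputable def colimitIsoOfCoconesIso [HasColimit F₁] [HasColimit F₂]
    (h : F₁.cocones ≅ F₂.cocones) : colimit F₁ ≅ colimit F₂ :=
  ((colimit.isColimit F₁).corepresentableBy.ofIso h).uniqueUpToIso
    (colimit.isColimit F₂).corepresentableBy

end

noncomputable def coconesCompIsoOfColimitCompYonedaIso {J K : Type u₃} [SmallCategory J]
    [SmallCategory K] {C : Type u₁} [Category.{u₃} C] (D : J ⥤ C) (E : K ⥤ C)
    (φ : colimit (D ⋙ yoneda) ≅ colimit (E ⋙ yoneda)) {ℰ : Type u₂} [Category.{v₂} ℰ]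
    (F : C ⥤ ℰ) : (D ⋙ F).cocones ≅ (E ⋙ F).cocones :=
  let W := (Functor.whiskeringRight Cᵒᵖ _ _).obj uliftFunctor.{v₂, u₃}
  let e : (D ⋙ uliftYoneda.{v₂}).cocones ≅ (E ⋙ uliftYoneda.{v₂}).cocones :=
    coconesIsoOfIsColimit (isColimitOfPreserves W (colimit.isColimit (D ⋙ yoneda)))
      (isColimitOfPreserves W (colimit.isColimit (E ⋙ yoneda))) (W.mapIso φ)
  (fullyFaithfulULiftFunctor.whiskeringRight ℰ).preimageIso
    (coconesCompULiftIso.{0} D F ≪≫ Functor.isoWhiskerLeft _ e ≪≫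
      (coconesCompULiftIso.{0} E F).symm)

end CategoryTheory.Limits

/-- If two small diagrams `D : J ⥤ C` and `E : K ⥤ C` have naturally isomorphic image
presheaves, then for every functor `F : C ⥤ D'`, `D ⋙ F` admits a colimit iff `E ⋙ F`
does, and in that case the colimits are isomorphic. -/
theorem stmt6 {J : Type v} [SmallCategory J] {K : Type v} [SmallCategory K]
    {C : Type u} [Category.{v} C] (D : J ⥤ C) (E : K ⥤ C)
    (h : Nonempty (colimit (D ⋙ yoneda) ≅ colimit (E ⋙ yoneda)))
    {D' : Type u2} [Category.{v2} D'] (F : C ⥤ D') :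
    (HasColimit (D ⋙ F) ↔ HasColimit (E ⋙ F)) ∧
      (∀ (_ : HasColimit (D ⋙ F)) (_ : HasColimit (E ⋙ F)),
        Nonempty (colimit (D ⋙ F) ≅ colimit (E ⋙ F))) := by
  obtain ⟨φ⟩ := h
  let e := coconesCompIsoOfColimitCompYonedaIso D E φ F
  refine ⟨⟨fun _ => HasColimit.ofCoconesIso _ _ e, fun _ => HasColimit.ofCoconesIso _ _ e.symm⟩,
    fun _ _ => ⟨colimitIsoOfCoconesIso e⟩⟩
end

section
/- Let D : J ⥤ C and E : K ⥤ C be small diagrams with naturally isomorphic image presheaves. Then D and E are connected by a zigzag in the category of small categories over C in which every underlying functor between index categories is a final functor. Concretely, there exists a small category S with final functors u : J ⥤ S and v : K ⥤ S and a functor G : S ⥤ C such that G ∘ u = D and G ∘ v = E. -/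
/-!
Both diagrams become final functors into the category of elements of the common image presheaf
`P`: for a colimit cocone `c` of `D ⋙ yoneda`, the functor `j ↦ (D j, c.ι j)` into
`CostructuredArrow yoneda c.pt` is final. That category is not small, but the full subcategory on
the objects hit by `D` and `E` is, and finality descends along fully faithful functors. Projecting
an element `(X, x)` to `X` recovers `D` and `E` on the nose.
-/

open CategoryTheory CategoryTheory.Limits

universe v u

namespace CategoryTheory

variable {J K : Type v} [SmallCategory J] [SmallCategory K] {𝒟 : Type*} [Category.{v} 𝒟]
  (U : J ⥤ 𝒟) (V : K ⥤ 𝒟)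

abbrev JointImage : Type v := InducedCategory 𝒟 (Sum.elim U.obj V.obj)

namespace JointImage

def inl : J ⥤ JointImage U V where
  obj := Sum.inl
  map g := InducedCategory.homMk (U.map g)

def inr : K ⥤ JointImage U V where
  obj := Sum.inr
  map g := InducedCategory.homMk (V.map g)

theorem inl_comp_inducedFunctor : inl U V ⋙ inducedFunctor _ = U := rfl

theorem inr_comp_inducedFunctor : inr U V ⋙ inducedFunctor _ = V := rfl

instance final_inl [U.Final] : (inl U V).Final :=
  have : (inl U V ⋙ inducedFunctor _).Final := inl_comp_inducedFunctor U V ▸ ‹_›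
  Functor.final_of_comp_full_faithful _ (inducedFunctor _)

instance final_inr [V.Final] : (inr U V).Final :=
  have : (inr U V ⋙ inducedFunctor _).Final := inr_comp_inducedFunctor U V ▸ ‹_›
  Functor.final_of_comp_full_faithful _ (inducedFunctor _)

end JointImage

end CategoryTheory

/-- If two small diagrams `D : J ⥤ C` and `E : K ⥤ C` have naturally isomorphic image
presheaves, then they are connected by a zigzag of final functors over `C`: there is a small
category `S`, final functors `u : J ⥤ S` and `v : K ⥤ S`, and a functor `G : S ⥤ C` with
`u ⋙ G = D` and `v ⋙ G = E`. -/
theorem stmt7 {J : Type v} [SmallCategory J] {K : Type v} [SmallCategory K]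
    {C : Type u} [Category.{v} C] (D : J ⥤ C) (E : K ⥤ C)
    (h : Nonempty (colimit (D ⋙ yoneda) ≅ colimit (E ⋙ yoneda))) :
    ∃ (S : Type v) (_ : SmallCategory S) (u : J ⥤ S) (v : K ⥤ S) (G : S ⥤ C),
      u.Final ∧ v.Final ∧ u ⋙ G = D ∧ v ⋙ G = E := by
  obtain ⟨φ⟩ := h
  let P := colimit (D ⋙ yoneda)
  let U : J ⥤ CostructuredArrow yoneda P :=
    (colimit.cocone _).toCostructuredArrow ⋙ CostructuredArrow.pre D yoneda P
  let V : K ⥤ CostructuredArrow yoneda P :=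
    ((colimit.cocone _).extend φ.inv).toCostructuredArrow ⋙ CostructuredArrow.pre E yoneda P
  have : U.Final := Presheaf.final_toCostructuredArrow_comp_pre D (colimit.isColimit _)
  have : V.Final :=
    Presheaf.final_toCostructuredArrow_comp_pre E ((colimit.isColimit _).extendIso φ.inv)
  exact ⟨JointImage U V, inferInstance, JointImage.inl U V, JointImage.inr U V,
    inducedFunctor _ ⋙ CostructuredArrow.proj yoneda P, inferInstance, inferInstance, rfl, rfl⟩
end

section
/- Let F : E ⥤ B be an opfibration between small categories, C a category with small colimits, and G : E ⥤ C a functor. Then the pointwise left Kan extension of G along F evaluated at an object B of B is isomorphic to the colimit of G restricted to the fiber F⁻¹(B). -/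
/-!
Pointwise, `(p.leftKanExtension G).obj b` is the colimit of `G` over the comma category `p ↓ b`.
The fiber over `b` embeds into `p ↓ b`, and for an opfibration this embedding is final: among the
maps from an object `(a, f : p a ⟶ b)` into the fiber, a cocartesian lift of `f` is initial.
Restricting a colimit along a final functor does not change it.
-/

open CategoryTheory CategoryTheory.Limits

universe v u

def IsOpfibration {E : Type*} [Category E] {B : Type*} [Category B] (p : E ⥤ B) : Prop :=
  ∀ (a : E) (b : B) (f : p.obj a ⟶ b),
    ∃ (a' : E) (φ : a ⟶ a'), Functor.IsStronglyCocartesian p f φ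

namespace CategoryTheory.Functor.Fiber

variable {E B : Type*} [Category E] [Category B] {p : E ⥤ B} {b : B}

lemma map_val_comp_eqToHom {x y : p.Fiber b} (φ : x ⟶ y) :
    p.map φ.1 ≫ eqToHom y.2 = eqToHom x.2 := by
  have := φ.2
  rw [IsHomLift.fac' p (𝟙 b) φ.1]
  simp

variable (p b) in
abbrev toCostructuredArrow : p.Fiber b ⥤ CostructuredArrow p b :=
  fiberInclusion.toCostructuredArrow p b (fun x => eqToHom x.2) map_val_comp_eqToHom

lemma isHomLift_iff_map_comp_eqToHom {a : E} {x : p.Fiber b} (f : p.obj a ⟶ b) (φ : a ⟶ x.1) :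
    p.IsHomLift f φ ↔ p.map φ ≫ eqToHom x.2 = f :=
  ⟨fun _ => by rw [IsHomLift.fac' p f φ]; simp,
    fun h => IsHomLift.of_fac p f φ rfl x.2 (by simp [← h])⟩

noncomputable def homOfIsCocartesian {a : E} (f : p.obj a ⟶ b) {x y : p.Fiber b} (φ : a ⟶ x.1)
    [IsCocartesian p f φ] (ψ : a ⟶ y.1) [p.IsHomLift f ψ] : x ⟶ y :=
  ⟨IsCocartesian.map p f φ ψ, inferInstance⟩

noncomputable def isInitialOfIsCocartesian {a : E} (f : p.obj a ⟶ b) {x : p.Fiber b}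
    (φ : a ⟶ x.1) [IsCocartesian p f φ] :
    IsInitial (StructuredArrow.mk (Y := x) (T := toCostructuredArrow p b)
      (CostructuredArrow.homMk (f := .mk f) (f' := (toCostructuredArrow p b).obj x) φ
        ((isHomLift_iff_map_comp_eqToHom f φ).1 inferInstance))) := by
  -- Instances are matched only up to reducible unfolding, so the codomain of `j.hom.left` has to
  -- be spelled `j.right.1`, here and in the `b' :=` arguments below.
  have lift (j : StructuredArrow (CostructuredArrow.mk f) (toCostructuredArrow p b)) :=
    (isHomLift_iff_map_comp_eqToHom f j.hom.left).2 (CostructuredArrow.w j.hom)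
  refine IsInitial.ofUniqueHom (fun j =>
    StructuredArrow.homMk (homOfIsCocartesian f φ (y := j.right) j.hom.left) ?_) ?_
  · ext
    exact IsCocartesian.fac p f φ (b' := j.right.1) j.hom.left
  · intro j ψ
    have := ψ.right.2
    ext
    exact IsCocartesian.map_uniq p f φ (b' := j.right.1) j.hom.left ψ.right.1
      (congrArg CommaMorphism.left (StructuredArrow.w ψ))

lemma final_toCostructuredArrow (hp : IsOpfibration p) : (toCostructuredArrow p b).Final where
  out := by
    rintro ⟨a, ⟨⟨⟩⟩, f⟩
    obtain ⟨a', φ, _⟩ := hp a b f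
    exact isConnected_of_isInitial _
      (isInitialOfIsCocartesian (x := ⟨a', IsHomLift.codomain_eq p f φ⟩) f φ)

end CategoryTheory.Functor.Fiber

/-- For an opfibration `p : E ⥤ B` between small categories, a cocomplete category `C` and a
functor `G : E ⥤ C`, the pointwise left Kan extension of `G` along `p`, evaluated at `b`, is
the colimit of the restriction of `G` to the fiber `p⁻¹(b)`. -/
theorem stmt10 {E : Type v} [SmallCategory E] {B : Type v} [SmallCategory B]
    {C : Type u} [Category.{v} C] [HasColimits C]
    (p : E ⥤ B) (hp : IsOpfibration p) (G : E ⥤ C) (b : B) :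
    Nonempty ((p.leftKanExtension G).obj b ≅
      colimit (Functor.Fiber.fiberInclusion ⋙ G : p.Fiber b ⥤ C)) := by
  have := Functor.Fiber.final_toCostructuredArrow (b := b) hp
  exact ⟨p.leftKanExtensionObjIsoColimit G b ≪≫
    (Functor.Final.colimitIso (Functor.Fiber.toCostructuredArrow p b)
      (CostructuredArrow.proj p b ⋙ G)).symm⟩
end

section
/- Let F : J ⥤ K be any functor between small categories. Let H = ∫ (F / −) be the Grothendieck construction of the functor K ⥤ Cat sending K to the comma category F / K (with action by postcomposition), with projection π : H ⥤ K and forgetful functor G : H ⥤ J sending (K, J, k : F J → K) to J. Then G is a final functor and π is a split opfibration. -/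
open CategoryTheory CategoryTheory.Limits

universe v

/-- For any functor `F : J ⥤ K` between small categories, the Grothendieck construction
`H = ∫ (F/−)` of the functor `K ⥤ Cat` sending `k` to the comma category `F/k` — which is
isomorphic to the comma category `Comma F (𝟭 K)` — comes with a forgetful functor
`G = Comma.fst : H ⥤ J` which is final, and a projection `π = Comma.snd : H ⥤ K` which is a
split opfibration, i.e. an opfibration which is, over `K`, the Grothendieck projection of a
functor `K ⥤ Cat`. -/
theorem stmt11 {J : Type v} [SmallCategory J] {K : Type v} [SmallCategory K] (F : J ⥤ K) :
    (Comma.fst F (𝟭 K)).Final ∧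
    IsOpfibration (Comma.snd F (𝟭 K)) ∧
    ∃ (Φ : K ⥤ Cat.{v, v}) (e : Comma F (𝟭 K) ≌ Grothendieck Φ),
      (∀ k : K, Φ.obj k = Cat.of (CostructuredArrow F k)) ∧
      Comma.snd F (𝟭 K) = e.functor ⋙ Grothendieck.forget Φ := by
  refine ⟨inferInstance, ?_, ?_⟩
  · intro a b f
    refine ⟨⟨a.left, b, a.hom ≫ f⟩, ⟨𝟙 a.left, f, by simp⟩, ?_⟩
    haveI : Functor.IsHomLift (Comma.snd F (𝟭 K)) f (⟨𝟙 a.left, f, by simp⟩ : a ⟶ ⟨a.left, b, a.hom ≫ f⟩) :=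
      CategoryTheory.IsHomLift.of_fac' (Comma.snd F (𝟭 K)) f _ rfl rfl (by simp)
    constructor
    intro b' g φ' hφ'
    have hr : f ≫ g = φ'.right := CategoryTheory.IsHomLift.eq_of_isHomLift (Comma.snd F (𝟭 K)) (f ≫ g) φ'
    refine ⟨⟨φ'.left, g, ?_⟩, ⟨?_, ?_⟩, ?_⟩
    · have := φ'.w
      simp only [Functor.id_map] at this ⊢
      rw [this, ← hr]
      simp
    · exact CategoryTheory.IsHomLift.of_fac' (Comma.snd F (𝟭 K)) g _ rfl rfl (by simp)
    · apply CommaMorphism.ext <;> simp [← hr]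
    · rintro χ' ⟨h1, h2⟩
      have habove : χ'.right = g := (CategoryTheory.IsHomLift.eq_of_isHomLift (Comma.snd F (𝟭 K)) (show (Comma.snd F (𝟭 K)).obj (⟨a.left, b, a.hom ≫ f⟩ : Comma F (𝟭 K)) ⟶ (Comma.snd F (𝟭 K)).obj b' from g) χ').symm
      apply CommaMorphism.ext
      · have := congrArg CommaMorphism.left h2
        simpa using this
      · exact habove
  · refine ⟨𝟭 K ⋙ CostructuredArrow.functor F,
      (CostructuredArrow.grothendieckPrecompFunctorEquivalence F (𝟭 K)).symm,
      fun k => rfl, rfl⟩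
end

section
/- Let F : J ⥤ K be a functor between small categories, and let H = ∫(F/−) with projection π : H ⥤ K and forgetful functor G : H ⥤ J as in the comma-category Grothendieck construction. Then for every category C and every functor D : J ⥤ C, the pointwise left Kan extension of D ∘ G along π exists if and only if the pointwise left Kan extension of D along F exists, and in that case they are naturally isomorphic. -/
/-!
Every comma square `Comma.fst L R ⋙ L ⟶ Comma.snd L R ⋙ R` is Guitart exact: a factorization of
`g : L a ⟶ R b` through an object of the comma category is linked by a span to the trivial one
`(a, b, g)`. For `L = F` and `R = 𝟭 K`, exactness says that at each `k : K` the diagram over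
`CostructuredArrow π k` is the restriction of the one over `CostructuredArrow F k` along a final
functor, so the two pointwise Kan extensions exist together, and pasting the unit of `Lan_F D` with the square
exhibits `Lan_F D` as a pointwise left Kan extension of `D ∘ G` along `π`; uniqueness of Kan
extensions gives the isomorphism.
-/

open CategoryTheory CategoryTheory.Limits

universe v u

namespace CategoryTheory.TwoSquare

variable {A B T : Type*} [Category A] [Category B] [Category T] (L : A ⥤ T) (R : B ⥤ T)

abbrev comma : TwoSquare (Comma.fst L R) (Comma.snd L R) L R := Comma.natTrans L R

instance guitartExact_comma : (comma L R).GuitartExact := by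
  rw [guitartExact_iff_isConnected_rightwards]
  intro a b g
  let P := StructuredArrowRightwards.mk (comma L R) g (⟨a, b, g⟩ : Comma L R) (𝟙 _) (𝟙 _)
    (by simp)
  have : Nonempty (StructuredArrowRightwards (comma L R) g) := ⟨P⟩
  suffices hP : ∀ Q, Zigzag Q P from
    zigzag_isConnected fun Q₁ Q₂ => (hP Q₁).trans (hP Q₂).symm
  intro Q
  obtain ⟨X, f, h, comm, rfl⟩ := StructuredArrowRightwards.mk_surjective Q
  -- `Y` keeps the source `a` of `P` and the target `X.right` of `Q`, so it maps to both.
  let Y := StructuredArrowRightwards.mk (comma L R) g (⟨a, X.right, L.map f ≫ X.hom⟩ : Comma L R)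
    (𝟙 _) h (by simpa using comm)
  have toQ : Y ⟶ StructuredArrowRightwards.mk (comma L R) g X f h comm :=
    StructuredArrow.homMk (CostructuredArrow.homMk ⟨f, 𝟙 _, by simp [Y]⟩ (Category.id_comp h))
      (by ext; exact Category.id_comp f)
  have toP : Y ⟶ P :=
    StructuredArrow.homMk
      (CostructuredArrow.homMk ⟨𝟙 _, h, by simpa [Y, P] using comm.symm⟩ (Category.comp_id h))
      (by ext; exact Category.id_comp _)
  exact (Zigzag.of_inv toQ).trans (Zigzag.of_hom toP)

end CategoryTheory.TwoSquare

/-- For a functor `F : J ⥤ K` between small categories, with `H = ∫(F/−) ≅ Comma F (𝟭 K)`,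
projection `π = Comma.snd` and forgetful functor `G = Comma.fst`, and any functor `D : J ⥤ C`:
the pointwise left Kan extension of `D ∘ G` along `π` exists iff the pointwise left Kan
extension of `D` along `F` does, and in that case they are naturally isomorphic. -/
theorem stmt12 {J : Type v} [SmallCategory J] {K : Type v} [SmallCategory K] (F : J ⥤ K)
    {C : Type u} [Category.{v} C] (D : J ⥤ C) :
    ((Comma.snd F (𝟭 K)).HasPointwiseLeftKanExtension (Comma.fst F (𝟭 K) ⋙ D) ↔
      F.HasPointwiseLeftKanExtension D) ∧
    ∀ (_ : (Comma.snd F (𝟭 K)).HasPointwiseLeftKanExtension (Comma.fst F (𝟭 K) ⋙ D))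
      (_ : F.HasPointwiseLeftKanExtension D),
      Nonempty ((Comma.snd F (𝟭 K)).leftKanExtension (Comma.fst F (𝟭 K) ⋙ D) ≅
        F.leftKanExtension D) := by
  let w := TwoSquare.comma F (𝟭 K)
  refine ⟨w.hasPointwiseLeftKanExtension_iff D, fun _ _ => ?_⟩
  let E := (Functor.LeftExtension.mk _ (F.leftKanExtensionUnit D)).compTwoSquare w
  have : E.right.IsLeftKanExtension E.hom :=
    (Functor.isPointwiseLeftKanExtensionOfIsLeftKanExtension (F.leftKanExtension D)
      (F.leftKanExtensionUnit D) |>.compTwoSquare w).isLeftKanExtension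
  exact ⟨Functor.leftKanExtensionUnique _ ((Comma.snd F (𝟭 K)).leftKanExtensionUnit _)
    E.right E.hom⟩
end

section
/- Let C be a category with small colimits, J a small category, and D : J ⥤ Cat a functor with Grothendieck construction ∫D (objects: pairs (J, X) with X in D J) and, for a cocone of functors D₁ J : D J ⥤ C assembling into a functor μ(D) : ∫D ⥤ C, let c(D₁ J) denote colimits of each D₁ J so that J ↦ c(D₁ J) forms a diagram c∗D : J ⥤ C. Then colim(c∗D) ≅ colim(μ(D)): the colimit of the diagram of colimits is isomorphic to the colimit over the Grothendieck construction. -/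
open CategoryTheory CategoryTheory.Limits

universe v u

/-- For a diagram of diagrams, i.e. `D : J ⥤ Cat` together with a functor
`G : Grothendieck D ⥤ C` (restricting to a diagram `Grothendieck.ι D j ⋙ G` on each fiber),
the colimit of the fiberwise-colimit diagram `j ↦ colim (Grothendieck.ι D j ⋙ G)` is
isomorphic to the colimit of `G` over the whole Grothendieck construction. -/
theorem stmt18 {J : Type v} [SmallCategory J] {C : Type u} [Category.{v} C] [HasColimits C]
    (D : J ⥤ Cat.{v, v}) (G : Grothendieck D ⥤ C) :
    Nonempty (colimit (fiberwiseColimit G) ≅ colimit G) := by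
  exact ⟨colimitFiberwiseColimitIso G⟩
end
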